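/- Let σ^t : H → H[[t]] be the unique ℚ-algebra homomorphism with σ^t(e_i) = e_i·(1+e₀t)^{−1} = ∑_{n≥0} e_i e₀^n (−t)^n for i ∈ {0,1}. Then σ^t maps H¹ into H¹[[t]] (i.e. every coefficient of σ^t(u) lies in H¹ for u ∈ H¹), and for all u, v ∈ H¹ one has σ^t(u * v) = σ^t(u) * σ^t(v), where the harmonic product on H¹[[t]] is extended coefficientwise: (∑_m w_m t^m) * (∑_n w'_n t^n) = ∑_{m,n} (w_m * w'_n) t^{m+n}. -/

import Mathlib

/- STATEMENT 0: the substitution σ^t(e_i) = e_i(1+e₀t)⁻¹ maps H¹ into H¹[[t]] and is a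
homomorphism for the harmonic product, extended coefficientwise (Cauchy product). -/

noncomputable section

abbrev H : Type := FreeAlgebra ℚ (Fin 2)

def e0 : H := FreeAlgebra.ι ℚ 0
def e1 : H := FreeAlgebra.ι ℚ 1

/-- `e_{(m)} = e₁ e₀^{m-1}`. -/
def eE (m : ℕ+) : H := e1 * e0 ^ ((m : ℕ) - 1)

/-- `e_k` for an index `k`. -/
def eIdx : List ℕ+ → H
  | [] => 1
  | m :: ks => eE m * eIdx ks

/-- `H¹`, the span of the `e_k`. -/
def H1 : Submodule ℚ H := Submodule.span ℚ (Set.range eIdx)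

/-- The unique ℚ-algebra homomorphism `H → H[[t]]` with
`σ^t(e_i) = e_i (1+e₀t)⁻¹ = ∑_{n≥0} e_i e₀ⁿ (-t)ⁿ`. -/
def sigmaT : H →ₐ[ℚ] PowerSeries H :=
  FreeAlgebra.lift ℚ (fun i : Fin 2 =>
    PowerSeries.mk fun n => (-1 : H) ^ n * (FreeAlgebra.ι ℚ i * e0 ^ n))


/-!
On the letters `e_{(d+1)} = e₁e₀^d` the substitution is explicit:
`σ^t(e₁e₀^d) = e₁e₀^d (1 + e₀t)^{-(d+1)} = ∑ₙ cₙ^{(d)} e₁e₀^{d+n} tⁿ`, where `c^{(d)}` are the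
coefficients of `(1 + t)^{-(d+1)}`. The coefficientwise product of two series `F, G` is the
bilinear map applied coefficientwise to `F ⊗ G ∈ (H ⊗ H)[[t]]`, and in this ring
`(F·σ^t(e_{(a)})) ⊗ (G·σ^t(e_{(b)})) = (F ⊗ G)(σ^t(e_{(a)}) ⊗ σ^t(e_{(b)}))`. Expanding the last
factor and applying the harmonic recursion term by term gives back the recursion for the images,
because `(1 + t)^{-a}(1 + t)^{-b} = (1 + t)^{-(a+b)}` recombines the diagonal terms into
`σ^t(e_{(a+b)})`. Induction on depth then gives `σ^t(e_k * e_l) = σ^t(e_k) * σ^t(e_l)`.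
-/

open PowerSeries Finset

lemma sum_antidiagonal_sum_antidiagonal_assoc {M : Type*} [AddCommMonoid M] (n : ℕ)
    (f : ℕ → ℕ → ℕ → M) :
    ∑ p ∈ antidiagonal n, ∑ q ∈ antidiagonal p.2, f p.1 q.1 q.2
      = ∑ p ∈ antidiagonal n, ∑ q ∈ antidiagonal p.1, f q.1 q.2 p.2 := by
  simp only [Finset.sum_sigma']
  refine Finset.sum_nbij' (fun x => ⟨(x.1.1 + x.2.1, x.2.2), (x.1.1, x.2.1)⟩)
    (fun x => ⟨(x.2.1, x.2.2 + x.1.2), (x.2.2, x.1.2)⟩) ?_ ?_ ?_ ?_ fun _ _ => rfl <;>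
  rintro ⟨⟨a, b⟩, c, d⟩ h <;>
  simp only [mem_sigma, HasAntidiagonal.mem_antidiagonal] at h ⊢ <;>
  first | exact ⟨by omega, trivial⟩ | (obtain ⟨-, rfl⟩ := h; rfl)

lemma sum_antidiagonal_sum_antidiagonal_assoc_swap {M : Type*} [AddCommMonoid M] (n : ℕ)
    (f : ℕ → ℕ → ℕ → M) :
    ∑ p ∈ antidiagonal n, ∑ q ∈ antidiagonal p.2, f p.1 q.1 q.2
      = ∑ p ∈ antidiagonal n, ∑ q ∈ antidiagonal p.1, f q.1 p.2 q.2 :=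
  .trans (sum_congr rfl fun _ _ => Finset.Nat.sum_antidiagonal_swap.symm)
    (sum_antidiagonal_sum_antidiagonal_assoc n fun a b c => f a c b)

lemma neg_one_pow_mul_eq_smul {R A : Type*} [CommRing R] [Ring A] [Algebra R A] (n : ℕ) (x : A) :
    (-1 : A) ^ n * x = ((-1 : R) ^ n) • x := by
  rw [Algebra.smul_def, map_pow, map_neg, map_one]

/-- The power series `(1 + X)^{-(d+1)}`. -/
def negBinomial (d : ℕ) : ℚ⟦X⟧ := rescale (-1) (invOneSubPow ℚ (d + 1))

lemma negBinomial_mul (d e : ℕ) : negBinomial d * negBinomial e = negBinomial (d + e + 1) := by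
  rw [negBinomial, negBinomial, negBinomial, ← map_mul, ← Units.val_mul, ← invOneSubPow_add]
  congr 3
  omega

lemma coeff_negBinomial_zero (n : ℕ) : coeff n (negBinomial 0) = (-1) ^ n := by
  simp [negBinomial, coeff_rescale, invOneSubPow_val_succ_eq_mk_add_choose]

/-- `letter d = e₁e₀^d`, that is `e_{(d+1)}`. -/
def letter (d : ℕ) : H := e1 * e0 ^ d

lemma eE_eq_letter (m : ℕ+) : eE m = letter ((m : ℕ) - 1) := rfl

lemma letter_eq_eE (d : ℕ) : letter d = eE d.succPNat := rfl

lemma eE_succPNat_add_succPNat (i j : ℕ) : eE (i.succPNat + j.succPNat) = letter (i + j + 1) := by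
  rw [eE_eq_letter, PNat.add_coe, Nat.succPNat_coe, Nat.succPNat_coe]
  congr 1
  omega

def sigmaLetter (d : ℕ) : H⟦X⟧ := mk fun n => coeff n (negBinomial d) • letter (d + n)

lemma sigmaT_e0 : sigmaT e0 = mk fun n => coeff n (negBinomial 0) • e0 ^ (n + 1) := by
  ext n
  rw [sigmaT, e0, FreeAlgebra.lift_ι_apply, coeff_mk, coeff_mk, neg_one_pow_mul_eq_smul (R := ℚ),
    coeff_negBinomial_zero, ← e0, pow_succ']

lemma sigmaT_letter (d : ℕ) : sigmaT (letter d) = sigmaLetter d := by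
  induction d with
  | zero =>
    ext n
    rw [letter, pow_zero, mul_one, sigmaT, e1, FreeAlgebra.lift_ι_apply, sigmaLetter,
      coeff_mk, coeff_mk, neg_one_pow_mul_eq_smul (R := ℚ), coeff_negBinomial_zero, zero_add,
      letter, ← e1]
  | succ d ih =>
    rw [letter, pow_succ, ← mul_assoc, map_mul, ← letter, ih, sigmaT_e0]
    ext n
    simp only [coeff_mul, sigmaLetter, coeff_mk, smul_mul_smul_comm]
    rw [← negBinomial_mul d 0, coeff_mul, sum_smul]
    refine sum_congr rfl fun p hp => ?_
    rw [letter, letter, mul_assoc, ← pow_add, ← HasAntidiagonal.mem_antidiagonal.mp hp]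
    congr 3
    omega

lemma coeff_mul_sigmaLetter (U : H⟦X⟧) (d n : ℕ) :
    coeff n (U * sigmaLetter d) =
      ∑ p ∈ antidiagonal n, coeff p.2 (negBinomial d) • (coeff p.1 U * letter (d + p.2)) := by
  rw [coeff_mul]
  exact sum_congr rfl fun p _ => by rw [sigmaLetter, coeff_mk, mul_smul_comm]

lemma coeff_mul_sigmaLetter_add_add_one (U : H⟦X⟧) (i j n : ℕ) :
    coeff n (U * sigmaLetter (i + j + 1)) =
      ∑ p ∈ antidiagonal n, ∑ q ∈ antidiagonal p.2,
        (coeff q.1 (negBinomial i) * coeff q.2 (negBinomial j)) •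
          (coeff p.1 U * letter (i + q.1 + (j + q.2) + 1)) := by
  rw [coeff_mul_sigmaLetter]
  refine sum_congr rfl fun p _ => ?_
  rw [← negBinomial_mul, coeff_mul, sum_smul]
  refine sum_congr rfl fun q hq => ?_
  rw [← HasAntidiagonal.mem_antidiagonal.mp hq]
  congr 3
  omega

lemma eIdx_append_singleton (k : List ℕ+) (m : ℕ+) : eIdx (k ++ [m]) = eIdx k * eE m := by
  induction k with
  | nil => simp [eIdx]
  | cons a k ih => simp [eIdx, ih, mul_assoc]

lemma eIdx_mem_H1 (k : List ℕ+) : eIdx k ∈ H1 :=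
  Submodule.subset_span ⟨k, rfl⟩

lemma letter_mul_mem_H1 (d : ℕ) {x : H} (hx : x ∈ H1) : letter d * x ∈ H1 := by
  induction hx using Submodule.span_induction with
  | mem x h =>
    obtain ⟨k, rfl⟩ := h
    exact eIdx_mem_H1 (d.succPNat :: k)
  | zero => simp
  | add x y _ _ hx hy => rw [mul_add]; exact add_mem hx hy
  | smul a x _ hx => rw [mul_smul_comm]; exact Submodule.smul_mem _ _ hx

lemma coeff_sigmaT_eIdx_mem_H1 (k : List ℕ+) (n : ℕ) : coeff n (sigmaT (eIdx k)) ∈ H1 := by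
  induction k generalizing n with
  | nil =>
    rw [eIdx, map_one, coeff_one]
    split_ifs
    · exact eIdx_mem_H1 []
    · exact zero_mem _
  | cons m k ih =>
    rw [eIdx, map_mul, eE_eq_letter, sigmaT_letter, coeff_mul]
    refine sum_mem fun p _ => ?_
    rw [sigmaLetter, coeff_mk, smul_mul_assoc]
    exact Submodule.smul_mem _ _ (letter_mul_mem_H1 _ (ih p.2))

lemma coeff_sigmaT_mem_H1 {u : H} (hu : u ∈ H1) (n : ℕ) : coeff n (sigmaT u) ∈ H1 := by
  induction hu using Submodule.span_induction with
  | mem x h =>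
    obtain ⟨k, rfl⟩ := h
    exact coeff_sigmaT_eIdx_mem_H1 k n
  | zero => simp
  | add x y _ _ hx hy => rw [map_add, map_add]; exact add_mem hx hy
  | smul c x _ hx => rw [map_smul, coeff_smul]; exact Submodule.smul_mem _ _ hx

section SeriesTensor

open TensorProduct Algebra.TensorProduct

variable (K : Type*) {A B C : Type*} [CommSemiring K] [Semiring A] [Algebra K A] [Semiring B]
  [Algebra K B] [Semiring C] [Algebra K C]

def seriesTmul (F : A⟦X⟧) (G : B⟦X⟧) : (A ⊗[K] B)⟦X⟧ :=
  map (includeLeft : A →ₐ[K] A ⊗[K] B).toRingHom F *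
    map (includeRight : B →ₐ[K] A ⊗[K] B).toRingHom G

variable {K}

def mapCoeffs {M N : Type*} [Semiring M] [Module K M] [Semiring N] [Module K N]
    (φ : M →ₗ[K] N) (W : M⟦X⟧) : N⟦X⟧ :=
  mk fun n => φ (coeff n W)

@[simp]
lemma coeff_mapCoeffs {M N : Type*} [Semiring M] [Module K M] [Semiring N] [Module K N]
    (φ : M →ₗ[K] N) (W : M⟦X⟧) (n : ℕ) : coeff n (mapCoeffs φ W) = φ (coeff n W) :=
  coeff_mk _ _

lemma coeff_seriesTmul (F : A⟦X⟧) (G : B⟦X⟧) (n : ℕ) :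
    coeff n (seriesTmul K F G) = ∑ p ∈ antidiagonal n, coeff p.1 F ⊗ₜ[K] coeff p.2 G := by
  rw [seriesTmul, coeff_mul]
  refine sum_congr rfl fun p _ => ?_
  rw [coeff_map, coeff_map]
  exact tmul_mul_tmul _ _ _ _ |>.trans (by rw [mul_one, one_mul])

lemma coeff_mapCoeffs_lift_seriesTmul (μ : A →ₗ[K] B →ₗ[K] C) (F : A⟦X⟧) (G : B⟦X⟧)
    (n : ℕ) :
    coeff n (mapCoeffs (lift μ) (seriesTmul K F G)) =
      ∑ p ∈ antidiagonal n, μ (coeff p.1 F) (coeff p.2 G) := by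
  simp only [coeff_mapCoeffs, coeff_seriesTmul, map_sum, lift.tmul]

lemma coeff_seriesTmul_one (F : A⟦X⟧) (n : ℕ) :
    coeff n (seriesTmul K F (1 : B⟦X⟧)) = coeff n F ⊗ₜ[K] 1 := by
  rw [seriesTmul, map_one, mul_one, coeff_map]
  rfl

lemma coeff_one_seriesTmul (G : B⟦X⟧) (n : ℕ) :
    coeff n (seriesTmul K (1 : A⟦X⟧) G) = 1 ⊗ₜ[K] coeff n G := by
  rw [seriesTmul, map_one, one_mul, coeff_map]
  rfl

lemma commute_map_includeRight_map_includeLeft (F : A⟦X⟧) (G : B⟦X⟧) :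
    Commute (map (includeRight : B →ₐ[K] A ⊗[K] B).toRingHom G)
      (map (includeLeft : A →ₐ[K] A ⊗[K] B).toRingHom F) := by
  ext n
  rw [coeff_mul, coeff_mul, ← Finset.Nat.sum_antidiagonal_swap]
  refine sum_congr rfl fun p _ => ?_
  simp only [coeff_map, AlgHom.toRingHom_eq_coe, RingHom.coe_coe, includeLeft_apply,
    includeRight_apply, tmul_mul_tmul, one_mul, mul_one, Prod.fst_swap, Prod.snd_swap]

lemma seriesTmul_mul_mul (F F' : A⟦X⟧) (G G' : B⟦X⟧) :
    seriesTmul K (F * F') (G * G') = seriesTmul K F G * seriesTmul K F' G' := by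
  simp only [seriesTmul, map_mul, mul_assoc,
    (commute_map_includeRight_map_includeLeft F' G).left_comm]

lemma seriesTmul_mul_left (F F' : A⟦X⟧) (G : B⟦X⟧) :
    seriesTmul K (F * F') G = seriesTmul K F G * seriesTmul K F' 1 := by
  rw [← seriesTmul_mul_mul, mul_one]

lemma seriesTmul_mul_right (F : A⟦X⟧) (G G' : B⟦X⟧) :
    seriesTmul K F (G * G') = seriesTmul K F G * seriesTmul K 1 G' := by
  rw [← seriesTmul_mul_mul, mul_one]

end SeriesTensor

section Harmonic

open TensorProduct

variable (mul : H →ₗ[ℚ] H →ₗ[ℚ] H)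

def HarmonicRecursion : Prop :=
  ∀ (k l : List ℕ+) (a b : ℕ+),
    mul (eIdx (k ++ [a])) (eIdx (l ++ [b])) =
      mul (eIdx (k ++ [a])) (eIdx l) * eE b + mul (eIdx k) (eIdx (l ++ [b])) * eE a
        - mul (eIdx k) (eIdx l) * eE (a + b)

def tensorH1 : Submodule ℚ (H ⊗[ℚ] H) := Submodule.map₂ (TensorProduct.mk ℚ H H) H1 H1

variable {mul}

lemma coeff_seriesTmul_mem_tensorH1 {F G : H⟦X⟧} (hF : ∀ n, coeff n F ∈ H1)
    (hG : ∀ n, coeff n G ∈ H1) (n : ℕ) : coeff n (seriesTmul ℚ F G) ∈ tensorH1 := by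
  rw [coeff_seriesTmul]
  exact sum_mem fun p _ => Submodule.apply_mem_map₂ _ (hF p.1) (hG p.2)

lemma lift_mul_mul_tmul_letter (hRec : HarmonicRecursion mul) {w : H ⊗[ℚ] H}
    (hw : w ∈ tensorH1) (i j : ℕ) :
    lift mul (w * (letter i ⊗ₜ letter j)) =
      lift mul (w * (letter i ⊗ₜ 1)) * letter j + lift mul (w * (1 ⊗ₜ letter j)) * letter i
        - lift mul w * letter (i + j + 1) := by
  rw [tensorH1, H1, Submodule.map₂_span_span] at hw
  induction hw using Submodule.span_induction with
  | mem w h =>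
    obtain ⟨_, ⟨k, rfl⟩, _, ⟨l, rfl⟩, rfl⟩ := h
    simp only [mk_apply, Algebra.TensorProduct.tmul_mul_tmul, mul_one, lift.tmul]
    rw [← eE_succPNat_add_succPNat, letter_eq_eE, letter_eq_eE, ← eIdx_append_singleton,
      ← eIdx_append_singleton]
    exact hRec k l _ _
  | zero => simp
  | add x y _ _ hx hy =>
    simp only [add_mul, map_add, hx, hy]
    abel
  | smul a x _ hx =>
    simp only [smul_mul_assoc, map_smul, hx, smul_add, smul_sub]

lemma mapCoeffs_lift_mul_seriesTmul_sigmaLetter (hRec : HarmonicRecursion mul)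
    {W : (H ⊗[ℚ] H)⟦X⟧} (hW : ∀ n, coeff n W ∈ tensorH1) (i j : ℕ) :
    mapCoeffs (lift mul) (W * seriesTmul ℚ (sigmaLetter i) (sigmaLetter j)) =
      mapCoeffs (lift mul) (W * seriesTmul ℚ (sigmaLetter i) 1) * sigmaLetter j
        + mapCoeffs (lift mul) (W * seriesTmul ℚ 1 (sigmaLetter j)) * sigmaLetter i
        - mapCoeffs (lift mul) W * sigmaLetter (i + j + 1) := by
  ext n
  set c : ℕ → ℕ → ℚ := fun d q => coeff q (negBinomial d)
  have hLHS : coeff n (mapCoeffs (lift mul) (W * seriesTmul ℚ (sigmaLetter i) (sigmaLetter j))) =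
      ∑ p ∈ antidiagonal n, ∑ q ∈ antidiagonal p.2, (c i q.1 * c j q.2) •
        lift mul (coeff p.1 W * (letter (i + q.1) ⊗ₜ letter (j + q.2))) := by
    simp only [coeff_mapCoeffs, coeff_mk, coeff_mul, coeff_seriesTmul, sigmaLetter, mul_sum,
      map_sum, smul_tmul_smul, mul_smul_comm, map_smul]
    rfl
  have hFirst : coeff n (mapCoeffs (lift mul) (W * seriesTmul ℚ (sigmaLetter i) 1) *
      sigmaLetter j) =
      ∑ p ∈ antidiagonal n, ∑ q ∈ antidiagonal p.2, (c i q.1 * c j q.2) •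
        (lift mul (coeff p.1 W * (letter (i + q.1) ⊗ₜ 1)) * letter (j + q.2)) := by
    rw [sum_antidiagonal_sum_antidiagonal_assoc n fun m a b => (c i a * c j b) •
      (lift mul (coeff m W * (letter (i + a) ⊗ₜ 1)) * letter (j + b)), coeff_mul_sigmaLetter]
    simp only [coeff_mapCoeffs, coeff_mk, coeff_mul, coeff_seriesTmul_one, sigmaLetter, map_sum,
      sum_mul, smul_sum, ← smul_tmul', mul_smul_comm, map_smul, smul_mul_assoc, smul_smul]
    simp only [c, mul_comm]
  have hSecond : coeff n (mapCoeffs (lift mul) (W * seriesTmul ℚ 1 (sigmaLetter j)) *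
      sigmaLetter i) =
      ∑ p ∈ antidiagonal n, ∑ q ∈ antidiagonal p.2, (c i q.1 * c j q.2) •
        (lift mul (coeff p.1 W * (1 ⊗ₜ letter (j + q.2))) * letter (i + q.1)) := by
    rw [sum_antidiagonal_sum_antidiagonal_assoc_swap n fun m a b => (c i a * c j b) •
      (lift mul (coeff m W * (1 ⊗ₜ letter (j + b))) * letter (i + a)), coeff_mul_sigmaLetter]
    simp only [coeff_mapCoeffs, coeff_mk, coeff_mul, coeff_one_seriesTmul, sigmaLetter, map_sum,
      sum_mul, smul_sum, tmul_smul, mul_smul_comm, map_smul, smul_mul_assoc, smul_smul]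
    rfl
  rw [map_sub, map_add, hLHS, hFirst, hSecond, coeff_mul_sigmaLetter_add_add_one,
    ← sum_add_distrib, ← sum_sub_distrib]
  refine sum_congr rfl fun p _ => ?_
  rw [← sum_add_distrib, ← sum_sub_distrib]
  refine sum_congr rfl fun q _ => ?_
  rw [coeff_mapCoeffs, lift_mul_mul_tmul_letter hRec (hW p.1), smul_sub, smul_add]

lemma mul_one_left_of_mem_H1 (hOneL : ∀ l : List ℕ+, mul (eIdx []) (eIdx l) = eIdx l) {x : H}
    (hx : x ∈ H1) : mul 1 x = x := by
  induction hx using Submodule.span_induction with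
  | mem x h => obtain ⟨l, rfl⟩ := h; exact hOneL l
  | zero => simp
  | add x y _ _ hx hy => rw [map_add, hx, hy]
  | smul a x _ hx => rw [map_smul, hx]

lemma mul_one_right_of_mem_H1 (hOneR : ∀ k : List ℕ+, mul (eIdx k) (eIdx []) = eIdx k) {x : H}
    (hx : x ∈ H1) : mul x 1 = x := by
  induction hx using Submodule.span_induction with
  | mem x h => obtain ⟨k, rfl⟩ := h; exact hOneR k
  | zero => simp
  | add x y _ _ hx hy => rw [map_add, LinearMap.add_apply, hx, hy]
  | smul a x _ hx => rw [map_smul, LinearMap.smul_apply, hx]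

lemma sigmaT_mul_eIdx (hOneL : ∀ l : List ℕ+, mul (eIdx []) (eIdx l) = eIdx l)
    (hOneR : ∀ k : List ℕ+, mul (eIdx k) (eIdx []) = eIdx k) (hRec : HarmonicRecursion mul)
    (k l : List ℕ+) :
    sigmaT (mul (eIdx k) (eIdx l)) =
      mapCoeffs (lift mul) (seriesTmul ℚ (sigmaT (eIdx k)) (sigmaT (eIdx l))) := by
  induction k using List.reverseRecOn generalizing l with
  | nil =>
    ext n
    rw [hOneL, coeff_mapCoeffs, eIdx, map_one, coeff_one_seriesTmul, lift.tmul,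
      mul_one_left_of_mem_H1 hOneL (coeff_sigmaT_eIdx_mem_H1 l n)]
  | append_singleton k a ihk =>
    obtain ⟨i, rfl⟩ : ∃ i : ℕ, i.succPNat = a := ⟨a.natPred, a.succPNat_natPred⟩
    induction l using List.reverseRecOn with
    | nil =>
      ext n
      rw [hOneR, coeff_mapCoeffs, eIdx, map_one, coeff_seriesTmul_one, lift.tmul,
        mul_one_right_of_mem_H1 hOneR (coeff_sigmaT_eIdx_mem_H1 _ n)]
    | append_singleton l b ihl =>
      obtain ⟨j, rfl⟩ : ∃ j : ℕ, j.succPNat = b := ⟨b.natPred, b.succPNat_natPred⟩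
      rw [hRec, eE_succPNat_add_succPNat, ← letter_eq_eE, ← letter_eq_eE, map_sub, map_add,
        map_mul, map_mul, map_mul, ihl, ihk, ihk]
      simp only [eIdx_append_singleton, ← letter_eq_eE, map_mul, sigmaT_letter]
      rw [seriesTmul_mul_mul, seriesTmul_mul_left, seriesTmul_mul_right,
        mapCoeffs_lift_mul_seriesTmul_sigmaLetter hRec
          (coeff_seriesTmul_mem_tensorH1 (coeff_sigmaT_eIdx_mem_H1 k) (coeff_sigmaT_eIdx_mem_H1 l))]

end Harmonic

theorem stmt_0
    (mul : H →ₗ[ℚ] H →ₗ[ℚ] H)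
    (hOneL : ∀ l : List ℕ+, mul (eIdx []) (eIdx l) = eIdx l)
    (hOneR : ∀ k : List ℕ+, mul (eIdx k) (eIdx []) = eIdx k)
    (hRec : ∀ (k l : List ℕ+) (a b : ℕ+),
      mul (eIdx (k ++ [a])) (eIdx (l ++ [b])) =
        mul (eIdx (k ++ [a])) (eIdx l) * eE b
        + mul (eIdx k) (eIdx (l ++ [b])) * eE a
        - mul (eIdx k) (eIdx l) * eE (a + b)) :
    (∀ u ∈ H1, ∀ n : ℕ, PowerSeries.coeff (R := H) n (sigmaT u) ∈ H1) ∧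
    (∀ u ∈ H1, ∀ v ∈ H1, ∀ n : ℕ,
      PowerSeries.coeff (R := H) n (sigmaT (mul u v)) =
        ∑ p ∈ Finset.HasAntidiagonal.antidiagonal n,
          mul (PowerSeries.coeff (R := H) p.1 (sigmaT u)) (PowerSeries.coeff (R := H) p.2 (sigmaT v))) := by
  refine ⟨fun u hu n => coeff_sigmaT_mem_H1 hu n, fun u hu v hv n => ?_⟩
  induction hu using Submodule.span_induction with
  | mem x hx =>
    obtain ⟨k, rfl⟩ := hx
    induction hv using Submodule.span_induction with
    | mem y hy =>
      obtain ⟨l, rfl⟩ := hy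
      rw [sigmaT_mul_eIdx hOneL hOneR hRec, coeff_mapCoeffs_lift_seriesTmul]
    | zero => simp
    | add y z _ _ hy hz => simp only [map_add, hy, hz, ← sum_add_distrib]
    | smul c y _ hy => simp only [map_smul, coeff_smul, hy, smul_sum]
  | zero => simp
  | add x y _ _ hx hy => simp only [map_add, LinearMap.add_apply, hx, hy, ← sum_add_distrib]
  | smul c x _ hx => simp only [map_smul, LinearMap.smul_apply, coeff_smul, hx, smul_sum]
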